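/- Let n ≥ 3 and 2 ≤ k ≤ n − 1. For every λ ∈ Γ_k one has σ_k(λ) σ_{k−1}(λ) ≥ σ_{k−2}(λ) σ_{k+1}(λ) (with the convention σ₀ = 1). -/

import Mathlib

open scoped BigOperators

/-- The `k`-th elementary symmetric polynomial `σ_k(λ)` of `λ ∈ ℝⁿ`, indexed by `k : ℤ`,
with the conventions `σ₀ = 1` and `σ_k = 0` for `k < 0` or `k > n`. -/
noncomputable def esymmZ (n : ℕ) (k : ℤ) (lam : Fin n → ℝ) : ℝ :=
  if k < 0 then 0 else ∑ s ∈ Finset.univ.powersetCard k.toNat, ∏ i ∈ s, lam i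

/-- `S_k(λ) := σ_k(λ) + α σ_{k-1}(λ)`. -/
noncomputable def SZ (n : ℕ) (α : ℝ) (k : ℤ) (lam : Fin n → ℝ) : ℝ :=
  esymmZ n k lam + α * esymmZ n (k - 1) lam

/-- The Garding cone `Γ_m = {λ ∈ ℝⁿ : σ_j(λ) > 0 for j = 1,…,m}` (so `Γ₀ = ℝⁿ`). -/
def Gamma (n : ℕ) (m : ℕ) : Set (Fin n → ℝ) :=
  {lam | ∀ j : ℕ, 1 ≤ j → j ≤ m → 0 < esymmZ n j lam}

/-- `Γ̃_k := Γ_{k-1} ∩ {λ : S_k(λ) > 0}`. -/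
def GammaTilde (n : ℕ) (α : ℝ) (k : ℕ) : Set (Fin n → ℝ) :=
  Gamma n (k - 1) ∩ {lam | 0 < SZ n α k lam}

/-- `σ_k(λ|i)`: the `k`-th elementary symmetric polynomial of the vector obtained
from `λ` by deleting the entry `λ_i`. -/
noncomputable def esymmDel (n : ℕ) (k : ℤ) (lam : Fin n → ℝ) (i : Fin n) : ℝ :=
  if k < 0 then 0 else
    ∑ s ∈ (Finset.univ.erase i).powersetCard k.toNat, ∏ j ∈ s, lam j

/-- `S_k(λ|i) := σ_k(λ|i) + α σ_{k-1}(λ|i)`.  In particular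
`S_k^{ii}(λ) = ∂S_k/∂λ_i = S_{k-1}(λ|i) = SDel n α (k-1) lam i`. -/
noncomputable def SDel (n : ℕ) (α : ℝ) (k : ℤ) (lam : Fin n → ℝ) (i : Fin n) : ℝ :=
  esymmDel n k lam i + α * esymmDel n (k - 1) lam i

/-- `σ_k(λ|pq)`: the `k`-th elementary symmetric polynomial of the vector obtained
from `λ` by deleting the entries `λ_p` and `λ_q`. -/
noncomputable def esymmDel2 (n : ℕ) (k : ℤ) (lam : Fin n → ℝ) (p q : Fin n) : ℝ :=
  if k < 0 then 0 else
    ∑ s ∈ ((Finset.univ.erase p).erase q).powersetCard k.toNat, ∏ l ∈ s, lam l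

/-- `S_k^{pp,qq}(λ) = ∂²S_k/∂λ_p∂λ_q`, which equals
`σ_{k-2}(λ|pq) + α σ_{k-3}(λ|pq)` for `p ≠ q`, and `0` for `p = q`. -/
noncomputable def Spq (n : ℕ) (α : ℝ) (k : ℤ) (lam : Fin n → ℝ) (p q : Fin n) : ℝ :=
  if p = q then 0 else esymmDel2 n (k - 2) lam p q + α * esymmDel2 n (k - 3) lam p q

/-!
Newton's inequalities `σ_{j-1} σ_{j+1} ≤ σ_j²` hold for every `λ ∈ ℝⁿ`: the polynomial
`∏ (X + λ_i)` is real-rooted, real-rootedness survives differentiation (Rolle) and reversal, and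
these operations reduce it to a quadratic whose discriminant is the Newton defect. On `Γ_k` the
numbers `σ_{k-2}, σ_{k-1}, σ_k` are nonnegative with `σ_{k-1} σ_k > 0`, so multiplying Newton's
inequalities for `j = k - 1` and `j = k` and cancelling `σ_{k-1} σ_k` gives the claim.
-/

open scoped Nat

namespace Polynomial

theorem Splits.derivative {p : ℝ[X]} (hp : p.Splits) : p.derivative.Splits := by
  rcases eq_or_ne p.natDegree 0 with h0 | h0
  · rw [eq_C_of_natDegree_eq_zero h0, derivative_C]
    exact Splits.zero
  refine splits_iff_card_roots.2 (le_antisymm (card_roots' _) ?_)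
  have hroots := card_roots_le_derivative p
  have hdeg := natDegree_derivative_lt h0
  rw [splits_iff_card_roots.1 hp] at hroots
  omega

theorem Splits.iterate_derivative {p : ℝ[X]} (hp : p.Splits) (k : ℕ) :
    (Polynomial.derivative^[k] p).Splits := by
  induction k with
  | zero => exact hp
  | succ k ih => rw [Function.iterate_succ_apply']; exact ih.derivative

theorem Splits.reverse {K : Type*} [Field K] {p : K[X]} (hp : p.Splits) : p.reverse.Splits := by
  induction hp using Submonoid.closure_induction with
  | mem f hf =>
    refine Splits.of_natDegree_le_one ((reverse_natDegree_le f).trans ?_)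
    obtain ⟨a, rfl⟩ | ⟨a, rfl⟩ := hf <;> simp
  | one => rw [← C_1, reverse_C]; exact Splits.C 1
  | mul f g _ _ hf hg => rw [reverse_mul_of_domain]; exact hf.mul hg

theorem Splits.discrim_nonneg {K : Type*} [Field K] [LinearOrder K] [IsStrictOrderedRing K]
    {p : K[X]} (hp : p.Splits) (hdeg : p.natDegree ≤ 2) :
    0 ≤ discrim (p.coeff 2) (p.coeff 1) (p.coeff 0) := by
  rcases eq_or_ne (p.coeff 2) 0 with h2 | h2
  · rw [discrim, h2]; nlinarith [sq_nonneg (p.coeff 1)]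
  have hdeg2 : p.natDegree = 2 := le_antisymm hdeg (le_natDegree_of_ne_zero h2)
  obtain ⟨x, hx⟩ := hp.exists_eval_eq_zero <| by
    rw [degree_eq_natDegree (by rintro rfl; simp at h2), hdeg2]; decide
  rw [eval_eq_sum_range, hdeg2] at hx
  simp only [Finset.sum_range_succ, Finset.sum_range_zero] at hx
  rw [discrim_eq_sq_of_quadratic_eq_zero (x := x) (by linear_combination hx)]
  exact sq_nonneg _

theorem factorial_mul_coeff_iterate_derivative {R : Type*} [CommSemiring R] (p : R[X]) (k t : ℕ) :
    (t ! : R) * (derivative^[k] p).coeff t = (t + k)! * p.coeff (t + k) := by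
  rw [coeff_iterate_derivative, nsmul_eq_mul, ← mul_assoc, ← Nat.cast_mul,
    ← Nat.factorial_mul_descFactorial (Nat.le_add_left k t), Nat.add_sub_cancel]

theorem Splits.coeff_mul_coeff_le {p : ℝ[X]} (hp : p.Splits) {i m : ℕ}
    (hdeg : p.natDegree = i + m + 2) :
    ((i + 2) * (m + 2) : ℝ) * (p.coeff m * p.coeff (m + 2)) ≤
      ((i + 1) * (m + 1) : ℝ) * p.coeff (m + 1) ^ 2 := by
  -- `r := (p^{(m)}).reverse^{(i)}` is a real-rooted quadratic with coefficients
  -- `p_{m+2}, p_{m+1}, p_m` up to factorials.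
  set q := Polynomial.derivative^[m] p
  have hq_coeff := factorial_mul_coeff_iterate_derivative p m
  have hq_deg : q.natDegree = i + 2 := by
    refine le_antisymm ((natDegree_iterate_derivative p m).trans (by omega))
      (le_natDegree_of_ne_zero fun h ↦ ?_)
    have hlead := hq_coeff (i + 2)
    rw [h, mul_zero, show i + 2 + m = p.natDegree by omega, coeff_natDegree] at hlead
    exact (mul_ne_zero (by positivity) (leadingCoeff_ne_zero.2 (by rintro rfl; simp at hdeg)))
      hlead.symm
  set r := Polynomial.derivative^[i] q.reverse
  have hr_coeff (t : ℕ) (ht : t ≤ 2) :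
      (t ! * (2 - t)! : ℝ) * r.coeff t = (i + t)! * (m + (2 - t))! * p.coeff (m + (2 - t)) := by
    rw [mul_comm (t ! : ℝ), mul_assoc, factorial_mul_coeff_iterate_derivative, coeff_reverse,
      hq_deg, revAt_le (by omega), show i + 2 - (t + i) = 2 - t by omega, mul_left_comm,
      hq_coeff, mul_assoc, add_comm i t, add_comm m]
  have hr : 0 ≤ discrim (r.coeff 2) (r.coeff 1) (r.coeff 0) :=
    ((hp.iterate_derivative m).reverse.iterate_derivative i).discrim_nonneg
      ((natDegree_iterate_derivative q.reverse i).trans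
        (by have := reverse_natDegree_le q; omega))
  have h0 := hr_coeff 0 (by omega)
  have h1 := hr_coeff 1 (by omega)
  have h2 := hr_coeff 2 (by omega)
  norm_num [Nat.factorial_succ] at h0 h1 h2
  rw [discrim] at hr
  refine le_of_mul_le_mul_left ?_ (by positivity : (0 : ℝ) < (i + 1) * (m + 1) * (i ! * m !) ^ 2)
  calc _ = (2 * r.coeff 2) * (2 * r.coeff 0) := by rw [h2, h0]; ring
    _ ≤ r.coeff 1 ^ 2 := by linarith
    _ = _ := by rw [h1]; ring

end Polynomial

namespace Multiset

open Polynomial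

theorem esymm_mul_esymm_le (s : Multiset ℝ) {i m : ℕ} (hs : card s = i + m + 2) :
    ((i + 2) * (m + 2) : ℝ) * (s.esymm i * s.esymm (i + 2)) ≤
      ((i + 1) * (m + 1) : ℝ) * s.esymm (i + 1) ^ 2 := by
  set p : ℝ[X] := (s.map fun r ↦ X + C r).prod
  have hp : p.Splits := Splits.multisetProd (by simp [Splits.X_add_C])
  have hp_deg : p.natDegree = i + m + 2 := by
    rw [natDegree_multiset_prod_of_monic _ (by simpa using fun r _ ↦ monic_X_add_C r)]
    simp [hs]
    omega
  have hp_coeff (t u : ℕ) (htu : t + u = i + 2) : p.coeff (m + t) = s.esymm u := by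
    rw [prod_X_add_C_coeff s (by omega), hs]
    congr 1
    omega
  have hnewton := hp.coeff_mul_coeff_le hp_deg
  rw [show p.coeff m = s.esymm (i + 2) from hp_coeff 0 _ (by omega),
    hp_coeff 1 (i + 1) (by omega), hp_coeff 2 i (by omega)] at hnewton
  rwa [mul_comm (s.esymm i)]

theorem esymm_mul_esymm_add_two_le_sq (s : Multiset ℝ) (j : ℕ) :
    s.esymm j * s.esymm (j + 2) ≤ s.esymm (j + 1) ^ 2 := by
  rcases lt_or_ge (card s) (j + 2) with hs | hs
  · simp [esymm, powersetCard_eq_empty _ hs, sq_nonneg]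
  obtain ⟨m, hm⟩ : ∃ m, card s = j + m + 2 := ⟨card s - (j + 2), by omega⟩
  have hnewton := s.esymm_mul_esymm_le hm
  have hcoeff : ((j + 1) * (m + 1) : ℝ) ≤ (j + 2) * (m + 2) := by gcongr <;> norm_num
  refine le_of_mul_le_mul_left (hnewton.trans ?_) (by positivity : (0 : ℝ) < (j + 2) * (m + 2))
  exact mul_le_mul_of_nonneg_right hcoeff (sq_nonneg _)

end Multiset

theorem mul_le_mul_of_mul_le_sq_of_mul_le_sq {K : Type*} [Field K] [LinearOrder K]
    [IsStrictOrderedRing K] {a b c d : K} (ha : 0 ≤ a) (hb : 0 < b) (hc : 0 < c)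
    (habc : a * c ≤ b ^ 2) (hbcd : b * d ≤ c ^ 2) : a * d ≤ b * c := by
  rcases le_or_gt d 0 with hd | hd
  · nlinarith [mul_pos hb hc]
  have hprod : (a * c) * (b * d) ≤ b ^ 2 * c ^ 2 :=
    mul_le_mul habc hbcd (by positivity) (by positivity)
  nlinarith [mul_pos hb hc]

theorem esymmZ_natCast (n j : ℕ) (lam : Fin n → ℝ) :
    esymmZ n j lam = (Finset.univ.val.map lam).esymm j := by
  rw [esymmZ, if_neg (Int.natCast_nonneg j).not_gt, Int.toNat_natCast, Finset.esymm_map_val]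

theorem sigma_k_mul_sigma_km1_ge_sigma_km2_mul_sigma_kp1_general
    (n : ℕ) (k : ℕ) (hk1 : 2 ≤ k)
    (lam : Fin n → ℝ) (hlam : lam ∈ Gamma n k) :
    esymmZ n k lam * esymmZ n ((k : ℤ) - 1) lam ≥
      esymmZ n ((k : ℤ) - 2) lam * esymmZ n ((k : ℤ) + 1) lam := by
  obtain ⟨j, rfl⟩ : ∃ j, k = j + 2 := ⟨k - 2, by omega⟩
  rw [show ((j + 2 : ℕ) : ℤ) - 1 = (j + 1 : ℕ) by push_cast; ring,
    show ((j + 2 : ℕ) : ℤ) - 2 = (j : ℕ) by push_cast; ring,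
    show ((j + 2 : ℕ) : ℤ) + 1 = (j + 3 : ℕ) by push_cast; ring]
  simp only [Gamma, Set.mem_ofPred_eq, esymmZ_natCast] at hlam ⊢
  set e := (Finset.univ.val.map lam).esymm
  have he_j : 0 ≤ e j := by
    rcases j with _ | j
    · simp [e, Multiset.esymm]
    · exact (hlam (j + 1) (by omega) (by omega)).le
  rw [ge_iff_le, mul_comm (e (j + 2))]
  exact mul_le_mul_of_mul_le_sq_of_mul_le_sq he_j (hlam (j + 1) (by omega) (by omega))
    (hlam (j + 2) (by omega) le_rfl) (Multiset.esymm_mul_esymm_add_two_le_sq _ j)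
    (Multiset.esymm_mul_esymm_add_two_le_sq _ (j + 1))

theorem sigma_k_mul_sigma_km1_ge_sigma_km2_mul_sigma_kp1
    (n : ℕ) (hn : 3 ≤ n) (k : ℕ) (hk1 : 2 ≤ k) (hk : k ≤ n - 1)
    (lam : Fin n → ℝ) (hlam : lam ∈ Gamma n k) :
    esymmZ n k lam * esymmZ n ((k : ℤ) - 1) lam ≥
      esymmZ n ((k : ℤ) - 2) lam * esymmZ n ((k : ℤ) + 1) lam :=
  sigma_k_mul_sigma_km1_ge_sigma_km2_mul_sigma_kp1_general n k hk1 lam hlam
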